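/- With the hypotheses listed in the context, the map γ defined by γ(h) = (f_1(h), f_2(h), Φ_2(h), r_2(h), …, f_Δ(h), Φ_Δ(h), r_Δ(h)) is an induced embedding of H into Γ: γ is injective, and for all distinct h, h' ∈ V(H), γ(h) and γ(h') are adjacent in Γ if and only if h and h' are adjacent in H. -/
import Mathlib


/-- `x` and `y` are adjacent in the fourth power `G⁴` of `G`: they are distinct and at
distance at most 4 in `G` (there is a walk of length at most 4 between them). -/
def Adj4 {V : Type*} (G : SimpleGraph V) (x y : V) : Prop :=
  x ≠ y ∧ ∃ w : G.Walk x y, w.length ≤ 4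

/-- A vertex of the graph `Γ`: a vertex `x_1 ∈ V(F)` together with, for each index
`2 ≤ i ≤ Δ`, a triple `(x_i, X_i, u_i) ∈ V(F) × P(ℕ) × V(Z)`. -/
abbrev GammaVert (VF VZ : Type*) (Δ : ℕ) :=
  VF × ({i : Fin Δ // i.val ≠ 0} → VF × Set ℕ × VZ)

/-- The `F`-component of a vertex of `Γ` at index `j`. -/
def xcomp {VF VZ : Type*} {Δ : ℕ} (a : GammaVert VF VZ Δ) (j : Fin Δ) : VF :=
  if h : j.val = 0 then a.1 else (a.2 ⟨j, h⟩).1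

/-- Adjacency in `Γ`: two vertices are adjacent iff there are indices `j < i` such that
(E1) the `j`-th and `i`-th `F`-components are adjacent in `F⁴`, (E2) the labels
`ρ_{x_i}(y_i)` and `ρ_{y_i}(x_i)` belong to `X_i` and `Y_i` respectively, and
(E3) the `i`-th `Z`-components are adjacent in `Z⁴`. -/
def GammaAdj {VF VZ : Type*} {Δ : ℕ} (F : SimpleGraph VF) (Z : SimpleGraph VZ)
    (ρ : VF → VF → ℕ) (a b : GammaVert VF VZ Δ) : Prop :=
  ∃ j i : Fin Δ, j < i ∧
    Adj4 F (xcomp a j) (xcomp b j) ∧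
    Adj4 F (xcomp a i) (xcomp b i) ∧
    ∃ hi : i.val ≠ 0,
      ρ (xcomp a i) (xcomp b i) ∈ (a.2 ⟨i, hi⟩).2.1 ∧
      ρ (xcomp b i) (xcomp a i) ∈ (b.2 ⟨i, hi⟩).2.1 ∧
      Adj4 Z (a.2 ⟨i, hi⟩).2.2 (b.2 ⟨i, hi⟩).2.2

/-- under hypotheses (H1), (H2), (H4) on the homomorphisms `f_i`, `r_i`, the map
`γ(h) = (f_1(h), f_2(h), Φ_2(h), r_2(h), …, f_Δ(h), Φ_Δ(h), r_Δ(h))` is an induced embedding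
of `H` into `Γ`: it is injective, and `γ h` is adjacent to `γ h'` in `Γ` iff `h` is adjacent
to `h'` in `H`. -/
theorem gamma_is_induced_embedding
    {VH VF VZ : Type*} (Δ n D : ℕ) (hΔ : 2 ≤ Δ) (hn : 1 ≤ n)
    (H : SimpleGraph VH) (Hs : Fin Δ → SimpleGraph VH)
    (hsub : ∀ i, Hs i ≤ H)
    (hcover : ∀ u v : VH, H.Adj u v → ({i : Fin Δ | (Hs i).Adj u v}).ncard = 2)
    (φ : Fin Δ → VH → ℕ)
    (hφrange : ∀ i h, φ i h < n)
    (hφinj : ∀ i, Function.Injective (φ i))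
    (hφedge : ∀ (i : Fin Δ) (h h' : VH), (Hs i).Adj h h' →
      0 < |(φ i h : ℤ) - (φ i h' : ℤ)| ∧ |(φ i h : ℤ) - (φ i h' : ℤ)| ≤ 4)
    (F : SimpleGraph VF) (Z : SimpleGraph VZ)
    (hD : ∀ v : VF, ({u : VF | Adj4 F v u}).ncard ≤ D)
    (ρ : VF → VF → ℕ)
    (hρbound : ∀ v u : VF, Adj4 F v u → ρ v u ≤ D)
    (hρinj : ∀ v u u' : VF, Adj4 F v u → Adj4 F v u' → ρ v u = ρ v u' → u = u')
    (f : Fin Δ → VH → VF)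
    (hfhom : ∀ (i : Fin Δ) (h h' : VH), (Hs i).Adj h h' → Adj4 F (f i h) (f i h'))
    (r : Fin Δ → VH → VZ)
    (hrhom : ∀ i : Fin Δ, i.val ≠ 0 → ∀ h h' : VH, (Hs i).Adj h h' →
      Adj4 Z (r i h) (r i h'))
    (Φ : Fin Δ → VH → Set ℕ)
    (hΦ : ∀ (i : Fin Δ) (h : VH),
      Φ i h = {m : ℕ | ∃ u : VH, (Hs i).Adj h u ∧ ρ (f i h) (f i u) = m})
    (B : Fin Δ → VH → Set VH)
    (hB : ∀ (i : Fin Δ) (h : VH),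
      B i h = {h' : VH | ¬ H.Adj h h' ∧ 4 < |(φ i h : ℤ) - (φ i h' : ℤ)| ∧
        ∃ j : Fin Δ, j < i ∧ Adj4 F (f j h) (f j h') ∧ Adj4 F (f i h) (f i h')})
    (hH1 : ∀ h h' : VH, h ≠ h' → ∀ i : Fin Δ, i.val ≠ 0 →
      f ⟨0, by omega⟩ h = f ⟨0, by omega⟩ h' → f i h ≠ f i h')
    (hH2 : ∀ h h' : VH, h ≠ h' → ∀ i : Fin Δ, i.val ≠ 0 →
      |(φ i h : ℤ) - (φ i h' : ℤ)| ≤ 8 → f i h ≠ f i h')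
    (hH4 : ∀ i : Fin Δ, i.val ≠ 0 → ∀ h : VH, ∀ h' ∈ B i h,
      ¬ Adj4 Z (r i h) (r i h'))
    (γ : VH → GammaVert VF VZ Δ)
    (hγ : ∀ h : VH, γ h =
      (f ⟨0, by omega⟩ h, fun i : {i : Fin Δ // i.val ≠ 0} =>
        (f i.1 h, Φ i.1 h, r i.1 h))) :
    Function.Injective γ ∧
    ∀ h h' : VH, h ≠ h' → (GammaAdj F Z ρ (γ h) (γ h') ↔ H.Adj h h') := by

  have hx : ∀ (h : VH) (k : Fin Δ), xcomp (γ h) k = f k h := by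
    intro h k
    rw [hγ]
    by_cases hk : k.val = 0
    · have : k = ⟨0, by omega⟩ := Fin.ext hk
      rw [this]
      simp [xcomp]
    · simp [xcomp, hk]
  have hsnd : ∀ (h : VH) (i : Fin Δ) (hi : i.val ≠ 0),
      (γ h).2 ⟨i, hi⟩ = (f i h, Φ i h, r i h) := by
    intro h i hi; rw [hγ]
  constructor
  · intro h h' heq
    by_contra hne
    have h1v : ((⟨1, by omega⟩ : Fin Δ)).val ≠ 0 := by simp
    have hf0 : f ⟨0, by omega⟩ h = f ⟨0, by omega⟩ h' := by
      have := congrArg Prod.fst heq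
      rwa [hγ, hγ] at this
    have hf1 : f ⟨1, by omega⟩ h = f ⟨1, by omega⟩ h' := by
      have := congrArg (fun a : GammaVert VF VZ Δ => (a.2 ⟨⟨1, by omega⟩, h1v⟩).1) heq
      rwa [hγ, hγ] at this
    exact hH1 h h' hne ⟨1, by omega⟩ h1v hf0 hf1
  · intro h h' hne
    constructor
    · rintro ⟨j, i, hji, hE1j, hE1i, hi0, hX, hY, hE3⟩
      rw [hx, hx] at hE1j hE1i
      rw [hx, hx, hsnd h i hi0] at hX
      rw [hsnd h i hi0, hsnd h' i hi0] at hE3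
      simp only at hX hE3
      rw [hΦ] at hX
      by_contra hnadj
      rcases le_or_gt (|(φ i h : ℤ) - (φ i h' : ℤ)|) 4 with h4 | h4
      · obtain ⟨u, hu, hρu⟩ := hX
        have hfu : f i u = f i h' :=
          hρinj (f i h) (f i u) (f i h') (hfhom i h u hu) hE1i hρu
        by_cases huh : u = h'
        · subst huh
          exact hnadj (hsub i hu)
        · have hb1 := (hφedge i h u hu).2
          have : |(φ i u : ℤ) - (φ i h' : ℤ)| ≤ 8 := by
            have := abs_sub_abs_le_abs_sub ((φ i u : ℤ)) ((φ i h' : ℤ))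
            have h5 : |(φ i u : ℤ) - (φ i h' : ℤ)| ≤
                |(φ i u : ℤ) - (φ i h : ℤ)| + |(φ i h : ℤ) - (φ i h' : ℤ)| := by
              calc |(φ i u : ℤ) - (φ i h' : ℤ)|
                  = |((φ i u : ℤ) - (φ i h : ℤ)) + ((φ i h : ℤ) - (φ i h' : ℤ))| := by ring_nf
                _ ≤ _ := abs_add_le _ _
            have h6 : |(φ i u : ℤ) - (φ i h : ℤ)| ≤ 4 := by rwa [abs_sub_comm]
            linarith
          exact hH2 u h' huh i hi0 this hfu
      · have hmem : h' ∈ B i h := by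
          rw [hB]
          exact ⟨hnadj, h4, j, hji, hE1j, hE1i⟩
        exact hH4 i hi0 h h' hmem hE3
    · intro hadj
      obtain ⟨a, b, hab, hset⟩ := Set.ncard_eq_two.mp (hcover h h' hadj)
      have ha : (Hs a).Adj h h' := by
        have : a ∈ {i : Fin Δ | (Hs i).Adj h h'} := by rw [hset]; simp
        exact this
      have hb : (Hs b).Adj h h' := by
        have : b ∈ {i : Fin Δ | (Hs i).Adj h h'} := by rw [hset]; simp
        exact this
      rcases lt_or_gt_of_ne hab with hlt | hgt
      · have hi0 : b.val ≠ 0 := by have := hlt; omega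
        refine ⟨a, b, hlt, ?_, ?_, hi0, ?_, ?_, ?_⟩
        · rw [hx, hx]; exact hfhom a h h' ha
        · rw [hx, hx]; exact hfhom b h h' hb
        · rw [hx, hx, hsnd h b hi0]
          simp only
          rw [hΦ]
          exact ⟨h', hb, rfl⟩
        · rw [hx, hx, hsnd h' b hi0]
          simp only
          rw [hΦ]
          exact ⟨h, hb.symm, rfl⟩
        · rw [hsnd h b hi0, hsnd h' b hi0]
          exact hrhom b hi0 h h' hb
      · have hi0 : a.val ≠ 0 := by have := hgt; omega
        refine ⟨b, a, hgt, ?_, ?_, hi0, ?_, ?_, ?_⟩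
        · rw [hx, hx]; exact hfhom b h h' hb
        · rw [hx, hx]; exact hfhom a h h' ha
        · rw [hx, hx, hsnd h a hi0]
          simp only
          rw [hΦ]
          exact ⟨h', ha, rfl⟩
        · rw [hx, hx, hsnd h' a hi0]
          simp only
          rw [hΦ]
          exact ⟨h, ha.symm, rfl⟩
        · rw [hsnd h a hi0, hsnd h' a hi0]
          exact hrhom a hi0 h h' ha
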